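/- arXiv:1705.10480 — 5 statements merged into one kernel-verified Lean document; each statement's English description precedes it below -/
import Mathlib

section
/- There exist an OBDM specification I, a source query Q_s, and an ontology query Q_g such that Q_g is a sound source-to-target rewriting of Q_s under the certain-answers-based semantics but not a sound source-to-target rewriting of Q_s under the model-based semantics. Concretely: the ontology has one binary predicate G and no axioms; the source schema has a binary relation r1 and unary relation r2; the mapping contains r1(x,y) → G(x,y) and r2(x) → ∃Y.G(x,Y); Q_s(w) = ∃Z. r1(Z,w) and Q_g(w) = ∃Z. G(Z,w). Then for every source database C and sem^C(I) ≠ ∅, cert(Q_g,I,C) ⊆ Q_s^C, but there exist C and B ∈ sem^C(I) with Q_g^B ⊄ Q_s^C. -/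
/-!
An answer `w` certain for `Q_g` lies in every model, in particular in the model that adds to `r1`
all pairs `(c, w + 1)`; that model satisfies the existential mapping assertion for `r2` without
putting `w` in the second column, so `w` must come from `r1`. A single model, on the other hand,
may realise the existential witness of an `r2`-fact at a fresh second-column position, which
`Q_s` does not see.
-/

/-- A source database: finite binary relation `r1` and finite unary relation
`r2` over the countable set ℕ of constants. -/
structure SrcDB7 where
  r1 : Finset (ℕ × ℕ)
  r2 : Finset ℕ

/-- sem^C(I): models G (binary relations over constants) such that
r1^C ⊆ G and every c ∈ r2^C has a G-successor. -/
def sem7 (C : SrcDB7) : Set (Set (ℕ × ℕ)) :=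
  {G | (↑C.r1 : Set (ℕ × ℕ)) ⊆ G ∧ ∀ c ∈ C.r2, ∃ d, (c, d) ∈ G}

/-- Q_s(w) = ∃Z. r1(Z,w). -/
def Qs7 (C : SrcDB7) : Set ℕ := {w | ∃ z, (z, w) ∈ C.r1}

/-- Q_g(w) = ∃Z. G(Z,w). -/
def Qg7 (G : Set (ℕ × ℕ)) : Set ℕ := {w | ∃ z, (z, w) ∈ G}

open Set

lemma union_prod_singleton_mem_sem7 (C : SrcDB7) (v : ℕ) :
    (↑C.r1 ∪ univ ×ˢ {v} : Set (ℕ × ℕ)) ∈ sem7 C :=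
  ⟨subset_union_left, fun c _ => ⟨v, Or.inr ⟨mem_univ c, rfl⟩⟩⟩

lemma Qg7_union_prod_singleton (C : SrcDB7) (v : ℕ) :
    Qg7 (↑C.r1 ∪ univ ×ˢ {v}) = insert v (Qs7 C) := by
  ext w
  simp only [Qg7, Qs7, mem_union, Finset.mem_coe, mem_prod, mem_univ, mem_singleton_iff,
    true_and, mem_insert_iff, mem_ofPred_eq, exists_or, exists_const]
  exact or_comm

lemma biInter_sem7_Qg7_subset_Qs7 (C : SrcDB7) : (⋂ G ∈ sem7 C, Qg7 G) ⊆ Qs7 C := by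
  intro w hw
  have hw' : w ∈ insert (w + 1) (Qs7 C) := by
    rw [← Qg7_union_prod_singleton]
    exact mem_iInter₂.mp hw _ (union_prod_singleton_mem_sem7 C (w + 1))
  exact hw'.resolve_left (Nat.succ_ne_self w).symm

lemma singleton_diag_mem_sem7 (a : ℕ) :
    ({(a, a)} : Set (ℕ × ℕ)) ∈ sem7 ⟨∅, {a}⟩ :=
  ⟨by simp, fun c hc => ⟨a, by rw [Finset.mem_singleton.mp hc]; rfl⟩⟩

lemma Qs7_of_r1_empty (r2 : Finset ℕ) : Qs7 ⟨∅, r2⟩ = ∅ := by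
  simp [Qs7]

/-- Q_g is a sound s-to-t rewriting of Q_s under the
certain-answers-based semantics, but not under the model-based semantics. -/
theorem sound_cert_but_not_sound_model :
    (∀ C : SrcDB7, (sem7 C).Nonempty → (⋂ G ∈ sem7 C, Qg7 G) ⊆ Qs7 C) ∧
    (∃ (C : SrcDB7), ∃ G ∈ sem7 C, ¬ Qg7 G ⊆ Qs7 C) := by
  refine ⟨fun C _ => biInter_sem7_Qg7_subset_Qs7 C,
    ⟨∅, {0}⟩, {(0, 0)}, singleton_diag_mem_sem7 0, fun h => ?_⟩
  have h0 : 0 ∈ Qg7 {(0, 0)} := ⟨0, rfl⟩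
  simpa [Qs7_of_r1_empty] using h h0
end

section
/- Restricting the model-based semantics to minimal models does not restore soundness in the example: with mapping r1(x,y) → G(x,y) and r2(x) → ∃Y.G(x,Y), there exist a source database C and a minimal model B ∈ sem^C(I) (i.e., no B' ∈ sem^C(I) with B' ⊊ B) such that Q_g^B ⊄ Q_s^C, where Q_s(w) = ∃Z.r1(Z,w) and Q_g(w) = ∃Z.G(Z,w). In particular, C with r1^C = {(a,b)}, r2^C = {c}, and B with G^B = {(a,b),(c,d)} (a,b,c,d distinct constants) witnesses this: B is a minimal element of sem^C(I) and d ∈ Q_g^B but d ∉ Q_s^C. -/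
/-- A source database: binary relation `r1` and unary relation `r2` over the
countably infinite set ℕ of constants. -/
structure SrcDB9 where
  r1 : Set (ℕ × ℕ)
  r2 : Set ℕ

/-- sem^C(I). -/
def sem9 (C : SrcDB9) : Set (Set (ℕ × ℕ)) :=
  {G | C.r1 ⊆ G ∧ ∀ c ∈ C.r2, ∃ d, (c, d) ∈ G}

/-- Q_s(w) = ∃Z. r1(Z,w). -/
def Qs9 (C : SrcDB9) : Set ℕ := {w | ∃ z, (z, w) ∈ C.r1}

/-- Q_g(w) = ∃Z. G(Z,w). -/
def Qg9 (G : Set (ℕ × ℕ)) : Set ℕ := {w | ∃ z, (z, w) ∈ G}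

/-! The model `B` interprets the existential of the second mapping by the fresh witness `d`.
Every model contains `r1^C` and some pair `(c, e)`; when `c` has no `r1`-successor, the only such
pair inside `B` is `(c, d)`, so no model is strictly below `B`. Yet `d` is an answer of `Q_g` over
`B`, while the answers of `Q_s` are just the second coordinates of `r1^C`. -/

theorem Qs9_eq_image (C : SrcDB9) : Qs9 C = Prod.snd '' C.r1 := by
  ext w
  simp [Qs9]

theorem Qg9_eq_image (G : Set (ℕ × ℕ)) : Qg9 G = Prod.snd '' G := by
  ext w
  simp [Qg9]

theorem insert_mem_sem9 (R : Set (ℕ × ℕ)) (c d : ℕ) : insert (c, d) R ∈ sem9 ⟨R, {c}⟩ :=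
  ⟨Set.subset_insert _ _, fun _ hc => ⟨d, hc ▸ Set.mem_insert _ _⟩⟩

theorem minimal_insert_mem_sem9 (R : Set (ℕ × ℕ)) {c : ℕ} (d : ℕ) (hc : ∀ e, (c, e) ∉ R) :
    Minimal (· ∈ sem9 ⟨R, {c}⟩) (insert (c, d) R) := by
  refine ⟨insert_mem_sem9 R c d, fun G ⟨hRG, hcG⟩ hGle => ?_⟩
  obtain ⟨e, hce⟩ := hcG c rfl
  have hed : e = d := by
    rcases hGle hce with h | h
    · exact (Prod.ext_iff.mp h).2
    · exact absurd h (hc e)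
  exact Set.insert_subset (hed ▸ hce) hRG

theorem minimal_models_not_sound_general
    (a b c d : ℕ) (hac : a ≠ c) (hbd : b ≠ d) :
    let C : SrcDB9 := ⟨{(a, b)}, {c}⟩
    let B : Set (ℕ × ℕ) := {(a, b), (c, d)}
    B ∈ sem9 C ∧
    (∀ B' ∈ sem9 C, ¬ B' ⊂ B) ∧
    d ∈ Qg9 B ∧ d ∉ Qs9 C ∧ ¬ Qg9 B ⊆ Qs9 C := by
  intro C B
  have hc : ∀ e, (c, e) ∉ C.r1 := fun e h => hac (Prod.ext_iff.mp h).1.symm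
  have hmin : Minimal (· ∈ sem9 C) B := by
    rw [show B = insert (c, d) C.r1 from Set.pair_comm _ _]
    exact minimal_insert_mem_sem9 C.r1 d hc
  have hdB : d ∈ Qg9 B := by
    rw [Qg9_eq_image]
    exact ⟨(c, d), Set.mem_insert_of_mem _ rfl, rfl⟩
  have hdC : d ∉ Qs9 C := by
    rw [Qs9_eq_image, Set.image_singleton]
    exact hbd.symm
  exact ⟨hmin.prop, fun _ hB' => hmin.not_ssubset hB', hdB, hdC, fun h => hdC (h hdB)⟩

/-- restricting to minimal models does not restore soundness:
for distinct constants a,b,c,d, the database C with r1^C = {(a,b)},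
r2^C = {c} and the model B with G^B = {(a,b),(c,d)} witness that B is a
minimal element of sem^C(I), yet d ∈ Q_g^B while d ∉ Q_s^C (so Q_g^B ⊄ Q_s^C). -/
theorem minimal_models_not_sound
    (a b c d : ℕ) (hab : a ≠ b) (hac : a ≠ c) (had : a ≠ d)
    (hbc : b ≠ c) (hbd : b ≠ d) (hcd : c ≠ d) :
    let C : SrcDB9 := ⟨{(a, b)}, {c}⟩
    let B : Set (ℕ × ℕ) := {(a, b), (c, d)}
    B ∈ sem9 C ∧
    (∀ B' ∈ sem9 C, ¬ B' ⊂ B) ∧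
    d ∈ Qg9 B ∧ d ∉ Qs9 C ∧ ¬ Qg9 B ⊆ Qs9 C :=
  minimal_models_not_sound_general a b c d hac hbd
end

section
/- In the two-source-relations example (mapping man(x) → Person(x) and woman(x) → Person(x), empty ontology), the empty query Q_g(x) = ⊥(x) is a sound source-to-target rewriting of Q_s(x) = woman(x) under the model-based semantics, and moreover it is the only sound one up to equivalence: any ontology query Q_g that is sound under the model-based semantics satisfies Q_g^B = ∅ for every model B arising in sem^C(I) for some C. -/
/-- A source database: unary relations man^C and woman^C over the countably
infinite set ℕ of constants. -/
structure SrcDB10 where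
  man : Set ℕ
  woman : Set ℕ

/-- sem^C(I): models (unary relations Person^B) with man^C ∪ woman^C ⊆ Person^B,
induced by the mapping man(x) → Person(x), woman(x) → Person(x) and empty TBox. -/
def sem10 (C : SrcDB10) : Set (Set ℕ) :=
  {P | C.man ∪ C.woman ⊆ P}

theorem mem_sem10_man_self (P : Set ℕ) : P ∈ sem10 ⟨P, ∅⟩ := by
  simp [sem10]

theorem eq_empty_of_sound {Qg : Set ℕ → Set ℕ}
    (hsound : ∀ C : SrcDB10, ∀ P ∈ sem10 C, Qg P ⊆ C.woman) (P : Set ℕ) : Qg P = ∅ :=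
  Set.subset_empty_iff.mp (hsound ⟨P, ∅⟩ P (mem_sem10_man_self P))

/-- the empty query ⊥ is a sound s-to-t rewriting of
Q_s(x) = woman(x) under the model-based semantics, and any monotone and generic
ontology query Q_g sound under the model-based semantics is empty on every
model arising in sem^C(I) for some C. -/
theorem bottom_only_sound_rewriting :
    -- soundness of the bottom query Q_g(x) = ⊥(x):
    ((∀ C : SrcDB10, ∀ P ∈ sem10 C, (∅ : Set ℕ) ⊆ C.woman) ∧
    -- uniqueness up to equivalence:
    ∀ Qg : Set ℕ → Set ℕ,
      Monotone Qg →
      (∀ π : Equiv.Perm ℕ, ∀ P : Set ℕ, Qg ((π : ℕ → ℕ) '' P) = (π : ℕ → ℕ) '' Qg P) →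
      (∀ C : SrcDB10, ∀ P ∈ sem10 C, Qg P ⊆ C.woman) →
      ∀ P : Set ℕ, (∃ C : SrcDB10, P ∈ sem10 C) → Qg P = ∅) :=
  ⟨fun C _ _ => C.woman.empty_subset,
    fun _ _ _ hsound P _ => eq_empty_of_sound hsound P⟩
end

section
/- In the man/woman example, Q_g(x) = Person(x) is an optimal complete source-to-target rewriting of Q_s(x) = woman(x): it is complete, and there is no ontology query Q'_g (monotone and generic) that is a complete source-to-target rewriting of Q_s and is properly contained in Q_g (i.e., Q'_g^B ⊆ Person^B for all models B, with strict inclusion for at least one model B). -/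
/-! Completeness alone already forces optimality: a query `Q` that is complete for `woman`
must contain every `Person^B`, since each `x ∈ Person^B` is a woman of the database
`{woman(x)}`, of which `B` is a model. So `Person ⊆ Q ⊆ Person` leaves no room for a proper
inclusion. -/

/-- A source database: finite unary relations man^C and woman^C over the
countably infinite set ℕ of constants. -/
structure SrcDB12 where
  man : Finset ℕ
  woman : Finset ℕ

/-- sem^C(I): models Person^B ⊆ Const with man^C ∪ woman^C ⊆ Person^B. -/
def sem12 (C : SrcDB12) : Set (Set ℕ) :=
  {P | (↑C.man ∪ ↑C.woman : Set ℕ) ⊆ P}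

def IsCompleteForWoman (Q : Set ℕ → Set ℕ) : Prop :=
  ∀ C : SrcDB12, ∀ P ∈ sem12 C, (↑C.woman : Set ℕ) ⊆ Q P

theorem isCompleteForWoman_id : IsCompleteForWoman id :=
  fun _ _ hP _ hx => hP (Or.inr hx)

theorem mem_sem12_singleton_woman {x : ℕ} {P : Set ℕ} (hx : x ∈ P) :
    P ∈ sem12 ⟨∅, {x}⟩ := by
  simpa [sem12] using hx

theorem IsCompleteForWoman.subset_apply {Q : Set ℕ → Set ℕ} (hQ : IsCompleteForWoman Q)
    (P : Set ℕ) : P ⊆ Q P := fun x hx =>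
  hQ ⟨∅, {x}⟩ P (mem_sem12_singleton_woman hx) (Finset.mem_singleton_self x)

/-- Q_g(x) = Person(x) is an optimal complete s-to-t rewriting of
Q_s(x) = woman(x): it is complete, and no monotone generic ontology query that
is a complete s-to-t rewriting of Q_s is properly contained in it. -/
theorem person_optimal_complete_rewriting :
    -- completeness of Q_g(x) = Person(x):
    (∀ C : SrcDB12, ∀ P ∈ sem12 C, (↑C.woman : Set ℕ) ⊆ P) ∧
    -- optimality:
    ¬ ∃ Qg' : Set ℕ → Set ℕ,
        Monotone Qg' ∧
        (∀ π : Equiv.Perm ℕ, ∀ P : Set ℕ,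
          Qg' ((π : ℕ → ℕ) '' P) = (π : ℕ → ℕ) '' Qg' P) ∧
        (∀ C : SrcDB12, ∀ P ∈ sem12 C, (↑C.woman : Set ℕ) ⊆ Qg' P) ∧
        (∀ P : Set ℕ, Qg' P ⊆ P) ∧
        (∃ P : Set ℕ, Qg' P ⊂ P) := by
  refine ⟨isCompleteForWoman_id, ?_⟩
  rintro ⟨Qg', -, -, hcomplete, -, P, hproper⟩
  exact hproper.not_subset (IsCompleteForWoman.subset_apply hcomplete P)
end

section
/- The forward direction of the non-completeness characterization: if there exist a valuation v of D_{Q_s} and a model B ∈ sem^{v(D_{Q_s})}(I) with v(tup(Q_s)) ∉ Q_g^B, then Q_g is not a complete source-to-target rewriting of Q_s with respect to I, because v(tup(Q_s)) ∈ Q_s^{v(D_{Q_s})} always holds (the valuation itself is a homomorphism from D_{Q_s} to v(D_{Q_s})). -/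
namespace Stmt14

variable {Const Null Rel Mdl : Type*}

/-- Values are constants or labeled nulls. -/
abbrev Val (Const Null : Type*) := Const ⊕ Null

/-- A fact: a relation symbol with a tuple of values.  An instance is a set of facts. -/
abbrev Fact (Const Null Rel : Type*) := Rel × List (Val Const Null)

abbrev Inst (Const Null Rel : Type*) := Set (Fact Const Null Rel)

/-- The function on values induced by a valuation `v : Null → Const`. -/
def valFun (v : Null → Const) : Val Const Null → Val Const Null :=
  Sum.elim Sum.inl (fun n => Sum.inl (v n))

/-- Apply a function on values to a fact. -/
def applyFact (h : Val Const Null → Val Const Null) (f : Fact Const Null Rel) :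
    Fact Const Null Rel :=
  (f.1, f.2.map h)

/-- Apply a valuation to an instance. -/
def applyInst (h : Val Const Null → Val Const Null) (D : Inst Const Null Rel) :
    Inst Const Null Rel :=
  applyFact h '' D

/-- A ground instance: every value occurring in it is a constant. -/
def Ground (C : Inst Const Null Rel) : Prop :=
  ∀ f ∈ C, ∀ x ∈ f.2, ∃ c : Const, x = Sum.inl c

/-- A homomorphism from instance `D` to instance `C`: a map on values fixing
constants and sending every fact of `D` into `C`. -/
def Hom (h : Val Const Null → Val Const Null) (D C : Inst Const Null Rel) : Prop :=
  (∀ c : Const, h (Sum.inl c) = Sum.inl c) ∧ ∀ f ∈ D, applyFact h f ∈ C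

/-- Evaluation of the conjunctive query with canonical instance `D` and head
tuple `tup` on a source instance `C`. -/
def QsEval (D : Inst Const Null Rel) (tup : List (Val Const Null))
    (C : Inst Const Null Rel) : Set (List (Val Const Null)) :=
  {l | ∃ h, Hom h D C ∧ l = tup.map h}

theorem valFun_inl (v : Null → Const) (c : Const) :
    valFun v (Sum.inl c : Val Const Null) = Sum.inl c :=
  rfl

theorem exists_valFun_eq_inl (v : Null → Const) (x : Val Const Null) :
    ∃ c : Const, valFun v x = Sum.inl c := by
  cases x with
  | inl c => exact ⟨c, rfl⟩
  | inr n => exact ⟨v n, rfl⟩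

theorem ground_applyInst {h : Val Const Null → Val Const Null}
    (hconst : ∀ x, ∃ c : Const, h x = Sum.inl c) (D : Inst Const Null Rel) :
    Ground (applyInst h D) := by
  rintro _ ⟨f, -, rfl⟩ _ hx
  obtain ⟨y, -, rfl⟩ := List.mem_map.mp hx
  exact hconst y

theorem hom_applyInst {h : Val Const Null → Val Const Null}
    (hfix : ∀ c : Const, h (Sum.inl c) = Sum.inl c) (D : Inst Const Null Rel) :
    Hom h D (applyInst h D) :=
  ⟨hfix, fun _ hf => Set.mem_image_of_mem _ hf⟩

theorem map_mem_qsEval_of_hom {h : Val Const Null → Val Const Null}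
    {D C : Inst Const Null Rel} (hom : Hom h D C) (tup : List (Val Const Null)) :
    tup.map h ∈ QsEval D tup C :=
  ⟨h, hom, rfl⟩

theorem not_complete_of_valuation_general
    (sem : Inst Const Null Rel → Set Mdl)
    (D : Inst Const Null Rel)
    (tup : List (Val Const Null))
    (Qg : Mdl → Set (List (Val Const Null)))
    (v : Null → Const) (B : Mdl)
    (hB : B ∈ sem (applyInst (valFun v) D))
    (hnot : tup.map (valFun v) ∉ Qg B) :
    (tup.map (valFun v) ∈ QsEval D tup (applyInst (valFun v) D)) ∧
    ¬ ∀ (C : Inst Const Null Rel), Ground C →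
        ∀ B' ∈ sem C, QsEval D tup C ⊆ Qg B' := by
  have hmem : tup.map (valFun v) ∈ QsEval D tup (applyInst (valFun v) D) :=
    map_mem_qsEval_of_hom (hom_applyInst (valFun_inl v) D) tup
  refine ⟨hmem, fun hcomplete => hnot ?_⟩
  exact hcomplete _ (ground_applyInst (exists_valFun_eq_inl v) D) B hB hmem

/-- forward direction of the non-completeness characterization,
together with the fact that v(tup(Q_s)) ∈ Q_s^{v(D_{Q_s})} always holds
(a valuation is itself a homomorphism from D_{Q_s} to v(D_{Q_s})). -/
theorem not_complete_of_valuation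
    (satO : Mdl → Prop)
    (satM : Inst Const Null Rel → Mdl → Prop)
    (satM_antitone : ∀ (C C' : Inst Const Null Rel) (B : Mdl),
      C' ⊆ C → satM C B → satM C' B)
    (sem : Inst Const Null Rel → Set Mdl)
    (hsem : ∀ C B, B ∈ sem C ↔ satO B ∧ satM C B)
    (D : Inst Const Null Rel)
    (tup : List (Val Const Null))
    (Qg : Mdl → Set (List (Val Const Null)))
    (v : Null → Const) (B : Mdl)
    (hB : B ∈ sem (applyInst (valFun v) D))
    (hnot : tup.map (valFun v) ∉ Qg B) :
    (tup.map (valFun v) ∈ QsEval D tup (applyInst (valFun v) D)) ∧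
    ¬ ∀ (C : Inst Const Null Rel), Ground C →
        ∀ B' ∈ sem C, QsEval D tup C ⊆ Qg B' :=
  not_complete_of_valuation_general sem D tup Qg v B hB hnot

end Stmt14
end
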